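/- arXiv:1405.4905 — 4 statements merged into one kernel-verified Lean document; each statement's English description precedes it below -/
import Mathlib

section
/- Let $\ell$ be a loss function with conjugate $g = \ell^*$, let $x^0 \in \mathrm{int}\,\ell(\mathbb{R})$ and $X \in L^\infty$. Then $\rho_\ell(X) = \sup_{\lambda > 0}\big( \inf_{s \in \mathbb{R}}\big(s + \lambda \mathbb{E}[\ell(-X-s)]\big) - \lambda x^0 \big)$, where $\rho_\ell(X) = \inf\{s \in \mathbb{R} \mid \mathbb{E}[\ell(-X-s)] \le x^0\}$. That is, strong Lagrangian duality holds for the shortfall risk minimization problem. -/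
open MeasureTheory Set Filter
open scoped Pointwise

noncomputable section

/-- Legendre-Fenchel conjugate of an `ℝ ∪ {+∞}`-valued function on `ℝ`. -/
def fconj (f : ℝ → EReal) (y : ℝ) : EReal := ⨆ x : ℝ, ((x * y : ℝ) : EReal) - f x

/-- Convexity for an `ℝ ∪ {+∞}`-valued function on `ℝ`. -/
def ERealConvexOn (f : ℝ → EReal) : Prop :=
  ∀ x y a b : ℝ, 0 ≤ a → 0 ≤ b → a + b = 1 →
    f (a * x + b * y) ≤ (a : EReal) * f x + (b : EReal) * f y

/-- A loss function: nondecreasing, convex, lower semicontinuous, finite at `0`,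
not identically constant on its effective domain, with values in `ℝ ∪ {+∞}`. -/
structure IsLossFunction (f : ℝ → EReal) : Prop where
  ne_bot : ∀ x, f x ≠ ⊥
  mono : Monotone f
  convex : ERealConvexOn f
  lsc : LowerSemicontinuous f
  finite_at_zero : f 0 ≠ ⊤
  nonconst : ∃ x y, f x ≠ ⊤ ∧ f y ≠ ⊤ ∧ f x ≠ f y

open Classical in
/-- Expectation of an `ℝ ∪ {+∞}`-valued random variable: the integral if the variable is
(a.e. finite and) integrable, and `+∞` otherwise. -/
def eexp {Ω : Type*} [MeasurableSpace Ω] (μ : Measure Ω) (g : Ω → EReal) : EReal :=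
  if Integrable (fun ω => (g ω).toReal) μ ∧ (∀ᵐ ω ∂μ, g ω ≠ ⊤) then
    ((∫ ω, (g ω).toReal ∂μ : ℝ) : EReal) else ⊤


/-- The scalar shortfall risk measure `ρ_ℓ(X) = inf {s | E[ℓ(-X-s)] ≤ x⁰}`. -/
def shortfallRho {Ω : Type*} [MeasurableSpace Ω] (μ : Measure Ω) (ℓ : ℝ → EReal) (x0 : ℝ)
    (X : Ω → ℝ) : ℝ :=
  sInf {s : ℝ | eexp μ (fun ω => ℓ (-X ω - s)) ≤ (x0 : EReal)}
/-!
Weak duality is immediate: every feasible `s` bounds each dual value from above. For strong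
duality put `F s = E[ℓ(-X - s)]`, a convex function of `s`, and fix `s₀ < ρ_ℓ(X)`, so that
`F s₀ ≥ x⁰`. Among the lines through `(s₀, x⁰)` that meet the graph of `F` to the right of `s₀`,
the one of least slope `m` lies below `F` everywhere: to the right by minimality, to the left by
convexity. A Slater point makes `m < 0`, and an affine minorant of `ℓ` makes `m > -∞`; then
`λ = -1/m` is a multiplier whose dual value is at least `s₀`.
-/

theorem exists_lt_lt_of_mem_interior_range {α β : Type*} [LinearOrder β] [TopologicalSpace β]
    [OrderTopology β] [DenselyOrdered β] {f : α → β} {y : β} (hy : y ∈ interior (range f))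
    (hl : ∃ l, l < y) (hu : ∃ u, y < u) : ∃ a b, f a < y ∧ y < f b := by
  obtain ⟨l, u, ⟨hly, hyu⟩, hsub⟩ :=
    (mem_nhds_iff_exists_Ioo_subset' hl hu).1 (mem_interior_iff_mem_nhds.1 hy)
  obtain ⟨p, hlp, hpy⟩ := exists_between hly
  obtain ⟨q, hyq, hqu⟩ := exists_between hyu
  obtain ⟨a, rfl⟩ := hsub ⟨hlp, hpy.trans hyu⟩
  obtain ⟨b, rfl⟩ := hsub ⟨hly.trans hyq, hqu⟩
  exact ⟨a, b, hpy, hyq⟩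

namespace ERealConvexOn

variable {f : ℝ → EReal}

theorem of_ne_top (hbot : ∀ x, f x ≠ ⊥)
    (h : ∀ x y a b : ℝ, 0 < a → 0 < b → a + b = 1 → f x ≠ ⊤ → f y ≠ ⊤ →
      f (a * x + b * y) ≤ (a : EReal) * f x + (b : EReal) * f y) :
    ERealConvexOn f := by
  intro x y a b ha hb hab
  rcases ha.eq_or_lt with rfl | ha
  · obtain rfl : b = 1 := by linarith
    simp
  rcases hb.eq_or_lt with rfl | hb
  · obtain rfl : a = 1 := by linarith
    simp
  by_cases hx : f x = ⊤
  · rw [hx, EReal.coe_mul_top_of_pos ha, EReal.top_add_of_ne_bot]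
    · exact le_top
    · exact (EReal.mul_ne_bot _ _).2 ⟨.inl (EReal.coe_ne_bot b), .inr (hbot y),
        .inl (EReal.coe_ne_top b), .inl (by exact_mod_cast hb.le)⟩
  by_cases hy : f y = ⊤
  · rw [hy, EReal.coe_mul_top_of_pos hb, EReal.add_top_of_ne_bot]
    · exact le_top
    · exact (EReal.mul_ne_bot _ _).2 ⟨.inl (EReal.coe_ne_bot a), .inr (hbot x),
        .inl (EReal.coe_ne_top a), .inl (by exact_mod_cast ha.le)⟩
  exact h x y a b ha hb hab hx hy

variable {a b c : ℝ}

theorem le_chord (hf : ERealConvexOn f) (hab : a < b) (hbc : b < c) {x z : ℝ}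
    (hx : f a ≤ x) (hz : f c ≤ z) : f b ≤ (((c - b) * x + (b - a) * z) / (c - a) : ℝ) := by
  have hca : 0 < c - a := by linarith
  have hθ : 0 ≤ (c - b) / (c - a) := div_nonneg (by linarith) hca.le
  have hθ' : 0 ≤ (b - a) / (c - a) := div_nonneg (by linarith) hca.le
  have h := hf a c _ _ hθ hθ' (by field_simp; ring)
  rw [show (c - b) / (c - a) * a + (b - a) / (c - a) * c = b by field_simp; ring] at h
  calc f b ≤ _ := h
    _ ≤ (((c - b) / (c - a) : ℝ) : EReal) * x + (((b - a) / (c - a) : ℝ) : EReal) * z :=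
      add_le_add (mul_le_mul_of_nonneg_left hx (by exact_mod_cast hθ))
        (mul_le_mul_of_nonneg_left hz (by exact_mod_cast hθ'))
    _ = _ := by norm_cast; field_simp

theorem line_le_left (hf : ERealConvexOn f) (hab : a < b) (hbc : b < c) {y k : ℝ}
    (hb : (y : EReal) ≤ f b) (hc : f c ≤ ((y + k * (c - b) : ℝ) : EReal)) :
    ((y + k * (a - b) : ℝ) : EReal) ≤ f a := by
  by_contra! ha
  obtain ⟨r, hfr, hr⟩ := EReal.exists_between_coe_real ha
  have hy := EReal.coe_le_coe_iff.1 (hb.trans (hf.le_chord hab hbc hfr.le hc))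
  have hr : r < y + k * (a - b) := by exact_mod_cast hr
  rw [le_div_iff₀ (by linarith)] at hy
  nlinarith [mul_lt_mul_of_pos_left hr (sub_pos.2 hbc)]

theorem line_le_right (hf : ERealConvexOn f) (hab : a < b) (hbc : b < c) {y k : ℝ}
    (ha : f a ≤ ((y + k * (a - b) : ℝ) : EReal)) (hb : (y : EReal) ≤ f b) :
    ((y + k * (c - b) : ℝ) : EReal) ≤ f c := by
  by_contra! hc
  obtain ⟨r, hfr, hr⟩ := EReal.exists_between_coe_real hc
  have hy := EReal.coe_le_coe_iff.1 (hb.trans (hf.le_chord hab hbc ha hfr.le))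
  have hr : r < y + k * (c - b) := by exact_mod_cast hr
  rw [le_div_iff₀ (by linarith)] at hy
  nlinarith [mul_lt_mul_of_pos_left hr (sub_pos.2 hab)]

end ERealConvexOn

def crossingSlopes (F : ℝ → EReal) (s₀ x₀ : ℝ) : Set ℝ :=
  {q | ∃ s, s₀ < s ∧ F s ≤ ((x₀ + q * (s - s₀) : ℝ) : EReal)}

theorem ERealConvexOn.line_sInf_crossingSlopes_le {F : ℝ → EReal} (hF : ERealConvexOn F)
    {s₀ x₀ : ℝ} (h₀ : (x₀ : EReal) ≤ F s₀) (hne : (crossingSlopes F s₀ x₀).Nonempty)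
    (hbdd : BddBelow (crossingSlopes F s₀ x₀)) (s : ℝ) :
    ((x₀ + sInf (crossingSlopes F s₀ x₀) * (s - s₀) : ℝ) : EReal) ≤ F s := by
  rcases lt_trichotomy s s₀ with hs | rfl | hs
  · have hclosed : IsClosed {q : ℝ | ((x₀ + q * (s - s₀) : ℝ) : EReal) ≤ F s} :=
      isClosed_le (continuous_coe_real_ereal.comp (by fun_prop)) continuous_const
    refine closure_minimal ?_ hclosed (csInf_mem_closure hne hbdd)
    rintro q ⟨s', hs', hq⟩
    exact hF.line_le_left hs hs' h₀ hq
  · simpa using h₀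
  · by_contra! hlt
    obtain ⟨r, hFr, hr⟩ := EReal.exists_between_coe_real hlt
    have hmem : (r - x₀) / (s - s₀) ∈ crossingSlopes F s₀ x₀ :=
      ⟨s, hs, by rw [div_mul_cancel₀ _ (sub_pos.2 hs).ne', add_sub_cancel]; exact hFr.le⟩
    have hle := csInf_le hbdd hmem
    have hr : r < x₀ + sInf (crossingSlopes F s₀ x₀) * (s - s₀) := by exact_mod_cast hr
    rw [le_div_iff₀ (sub_pos.2 hs)] at hle
    linarith

-- A negative slope is only attained beyond `ρ`, at distance at least `ρ - s₀` from `s₀`,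
-- where the affine minorant bounds it.
theorem bddBelow_crossingSlopes {F : ℝ → EReal} {a b x₀ ρ s₀ : ℝ}
    (hab : ∀ s, ((a + b * s : ℝ) : EReal) ≤ F s) (hρ : ∀ s, F s ≤ x₀ → ρ ≤ s) (hs₀ : s₀ < ρ) :
    BddBelow (crossingSlopes F s₀ x₀) := by
  set C := |a + b * s₀ - x₀|
  refine ⟨min 0 (b - C / (ρ - s₀)), ?_⟩
  rintro q ⟨s, hs, hq⟩
  rcases le_or_gt 0 q with hq0 | hq0
  · exact min_le_of_left_le hq0
  refine min_le_of_right_le ?_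
  have hsρ : ρ ≤ s :=
    hρ s (hq.trans (by exact_mod_cast (by nlinarith : x₀ + q * (s - s₀) ≤ x₀)))
  have hline : a + b * s ≤ x₀ + q * (s - s₀) := by exact_mod_cast (hab s).trans hq
  have hD : C / (ρ - s₀) * (ρ - s₀) = C := div_mul_cancel₀ _ (sub_pos.2 hs₀).ne'
  have hD0 : 0 ≤ C / (ρ - s₀) := div_nonneg (abs_nonneg _) (sub_pos.2 hs₀).le
  nlinarith [neg_abs_le (a + b * s₀ - x₀)]

theorem ERealConvexOn.exists_lagrange_multiplier {F : ℝ → EReal} (hF : ERealConvexOn F)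
    {a b : ℝ} (hab : ∀ s, ((a + b * s : ℝ) : EReal) ≤ F s) {x₀ ρ s₀ s' : ℝ}
    (hρ : ∀ s, F s ≤ x₀ → ρ ≤ s) (hs₀ : s₀ < ρ) (hs' : F s' < x₀) :
    ∃ lam > 0, ∀ s, ((s₀ + lam * x₀ : ℝ) : EReal) ≤ s + lam * F s := by
  have h₀ : (x₀ : EReal) ≤ F s₀ := by
    by_contra! h
    exact (hρ s₀ h.le).not_gt hs₀
  have hs's₀ : s₀ < s' := hs₀.trans_le (hρ s' hs'.le)
  obtain ⟨r, hFr, hrx⟩ := EReal.exists_between_coe_real hs'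
  have hslater : (r - x₀) / (s' - s₀) ∈ crossingSlopes F s₀ x₀ :=
    ⟨s', hs's₀, by rw [div_mul_cancel₀ _ (sub_pos.2 hs's₀).ne', add_sub_cancel]; exact hFr.le⟩
  have hbdd := bddBelow_crossingSlopes hab hρ hs₀
  set m := sInf (crossingSlopes F s₀ x₀)
  have hm : m < 0 := (csInf_le hbdd hslater).trans_lt
    (div_neg_of_neg_of_pos (by linarith [EReal.coe_lt_coe_iff.1 hrx]) (sub_pos.2 hs's₀))
  have hline := hF.line_sInf_crossingSlopes_le h₀ ⟨_, hslater⟩ hbdd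
  refine ⟨-m⁻¹, neg_pos.2 (inv_lt_zero.2 hm), fun s => ?_⟩
  calc ((s₀ + -m⁻¹ * x₀ : ℝ) : EReal)
        = s + ((-m⁻¹ : ℝ) : EReal) * ((x₀ + m * (s - s₀) : ℝ)) := by
        norm_cast
        rw [mul_add, ← mul_assoc, neg_mul m⁻¹ m, inv_mul_cancel₀ hm.ne]
        ring
    _ ≤ s + ((-m⁻¹ : ℝ) : EReal) * F s :=
        add_le_add le_rfl (mul_le_mul_of_nonneg_left (hline s)
          (EReal.coe_nonneg.2 (neg_pos.2 (inv_lt_zero.2 hm)).le))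

theorem iInf_add_mul_sub_le_of_le {F : ℝ → EReal} {x₀ lam s : ℝ} (hlam : 0 ≤ lam)
    (hs : F s ≤ x₀) :
    (⨅ t : ℝ, ((t : EReal) + lam * F t)) - ((lam * x₀ : ℝ) : EReal) ≤ s := by
  calc _ ≤ ((s + lam * x₀ : ℝ) : EReal) - ((lam * x₀ : ℝ) : EReal) := by
        refine EReal.sub_le_sub ((iInf_le _ s).trans ?_) le_rfl
        rw [EReal.coe_add, EReal.coe_mul]
        exact add_le_add le_rfl (mul_le_mul_of_nonneg_left hs (EReal.coe_nonneg.2 hlam))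
    _ = s := by rw [← EReal.coe_sub, add_sub_cancel_right]

theorem ERealConvexOn.sInf_sublevel_eq_iSup_lagrangian {F : ℝ → EReal} (hF : ERealConvexOn F)
    (hmin : ∃ a b : ℝ, ∀ s, ((a + b * s : ℝ) : EReal) ≤ F s) {x₀ : ℝ}
    (hslater : ∃ s, F s < x₀) (hbdd : BddBelow {s | F s ≤ x₀}) :
    ((sInf {s | F s ≤ x₀} : ℝ) : EReal) =
      ⨆ lam ∈ Ioi (0 : ℝ), (⨅ s : ℝ, ((s : EReal) + lam * F s)) - ((lam * x₀ : ℝ) : EReal) := by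
  obtain ⟨a, b, hab⟩ := hmin
  obtain ⟨s', hs'⟩ := hslater
  refine le_antisymm (EReal.ge_of_forall_gt_iff_ge.1 fun s₀ hs₀ => ?_)
    (iSup₂_le fun lam hlam => EReal.le_of_forall_lt_iff_le.1 fun z hz => ?_)
  · obtain ⟨lam, hlam, hle⟩ := hF.exists_lagrange_multiplier hab (fun s hs => csInf_le hbdd hs)
      (EReal.coe_lt_coe_iff.1 hs₀) hs'
    refine le_trans ?_ (le_iSup₂ (f := fun lam (_ : lam ∈ Ioi (0 : ℝ)) =>
      (⨅ s : ℝ, ((s : EReal) + lam * F s)) - ((lam * x₀ : ℝ) : EReal)) lam hlam)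
    calc (s₀ : EReal) = ((s₀ + lam * x₀ : ℝ) : EReal) - ((lam * x₀ : ℝ) : EReal) := by
          rw [← EReal.coe_sub, add_sub_cancel_right]
      _ ≤ _ := EReal.sub_le_sub (le_iInf hle) le_rfl
  · obtain ⟨s, hs, hsz⟩ := exists_lt_of_csInf_lt ⟨s', hs'.le⟩ (EReal.coe_lt_coe_iff.1 hz)
    exact (iInf_add_mul_sub_le_of_le hlam.out.le hs).trans (by exact_mod_cast hsz.le)

section eexp

variable {Ω : Type*} [MeasurableSpace Ω] {μ : Measure Ω} {g : Ω → EReal}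

theorem eexp_ne_bot : eexp μ g ≠ ⊥ := by
  unfold eexp
  split_ifs <;> simp

theorem exists_integrable_of_eexp_ne_top (hg : eexp μ g ≠ ⊤) (hbot : ∀ ω, g ω ≠ ⊥) :
    ∃ f : Ω → ℝ, Integrable f μ ∧ (∀ᵐ ω ∂μ, g ω = f ω) ∧ eexp μ g = ↑(∫ ω, f ω ∂μ) := by
  unfold eexp at hg ⊢
  split_ifs at hg ⊢ with h
  · exact ⟨_, h.1, h.2.mono fun ω hω => (EReal.coe_toReal hω (hbot ω)).symm, rfl⟩
  · exact absurd rfl hg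

theorem coe_le_eexp [IsProbabilityMeasure μ] {c : ℝ} (h : ∀ᵐ ω ∂μ, (c : EReal) ≤ g ω) :
    (c : EReal) ≤ eexp μ g := by
  unfold eexp
  split_ifs with hg
  · have hle : ∀ᵐ ω ∂μ, c ≤ (g ω).toReal := by
      filter_upwards [h, hg.2] with ω h₁ h₂
      simpa using EReal.toReal_le_toReal h₁ (EReal.coe_ne_bot c) h₂
    simpa using integral_mono_ae (integrable_const c) hg.1 hle
  · exact le_top

theorem eexp_le_integral (hg : AEMeasurable g μ) {h f : Ω → ℝ} (hh : Integrable h μ)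
    (hf : Integrable f μ) (hhg : ∀ᵐ ω ∂μ, (h ω : EReal) ≤ g ω) (hgf : ∀ᵐ ω ∂μ, g ω ≤ f ω) :
    eexp μ g ≤ ↑(∫ ω, f ω ∂μ) := by
  have hbounds : ∀ᵐ ω ∂μ, g ω ≠ ⊤ ∧ h ω ≤ (g ω).toReal ∧ (g ω).toReal ≤ f ω := by
    filter_upwards [hhg, hgf] with ω h₁ h₂
    have htop : g ω ≠ ⊤ := ne_top_of_le_ne_top (EReal.coe_ne_top _) h₂
    have hbot : g ω ≠ ⊥ := ne_bot_of_le_ne_bot (EReal.coe_ne_bot _) h₁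
    rw [← EReal.coe_toReal htop hbot] at h₁ h₂
    exact ⟨htop, EReal.coe_le_coe_iff.1 h₁, EReal.coe_le_coe_iff.1 h₂⟩
  have hint : Integrable (fun ω => (g ω).toReal) μ := by
    refine (hh.abs.add hf.abs).mono' hg.ereal_toReal.aestronglyMeasurable ?_
    filter_upwards [hbounds] with ω ⟨_, h₁, h₂⟩
    rw [Real.norm_eq_abs, abs_le, Pi.add_apply]
    constructor <;>
      linarith [neg_abs_le (h ω), le_abs_self (f ω), abs_nonneg (h ω), abs_nonneg (f ω)]
  unfold eexp
  rw [if_pos ⟨hint, hbounds.mono fun _ hω => hω.1⟩]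
  exact_mod_cast integral_mono_ae hint hf (hbounds.mono fun _ hω => hω.2.2)

theorem ERealConvexOn.eexp_comp_sub [IsFiniteMeasure μ] {φ : ℝ → EReal} (hφ : ERealConvexOn φ)
    (hbot : ∀ x, φ x ≠ ⊥) (hmeas : Measurable φ) {Y : Ω → ℝ} (hY : Measurable Y)
    (hlow : ∀ s, ∃ c : ℝ, ∀ᵐ ω ∂μ, (c : EReal) ≤ φ (Y ω - s)) :
    ERealConvexOn fun s => eexp μ fun ω => φ (Y ω - s) := by
  refine ERealConvexOn.of_ne_top (fun _ => eexp_ne_bot) fun s t a b ha hb hab hs ht => ?_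
  obtain ⟨f₁, hf₁, hg₁, he₁⟩ := exists_integrable_of_eexp_ne_top hs fun ω => hbot _
  obtain ⟨f₂, hf₂, hg₂, he₂⟩ := exists_integrable_of_eexp_ne_top ht fun ω => hbot _
  obtain ⟨c, hc⟩ := hlow (a * s + b * t)
  calc eexp μ (fun ω => φ (Y ω - (a * s + b * t))) ≤ ↑(∫ ω, (a * f₁ ω + b * f₂ ω) ∂μ) := by
        refine eexp_le_integral (hmeas.comp (hY.sub_const _)).aemeasurable (integrable_const c)
          ((hf₁.const_mul a).add (hf₂.const_mul b)) hc ?_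
        filter_upwards [hg₁, hg₂] with ω h₁ h₂
        have hconv := hφ (Y ω - s) (Y ω - t) a b ha.le hb.le hab
        rw [show a * (Y ω - s) + b * (Y ω - t) = Y ω - (a * s + b * t) by
          linear_combination (Y ω) * hab, h₁, h₂] at hconv
        exact_mod_cast hconv
    _ = a * eexp μ (fun ω => φ (Y ω - s)) + b * eexp μ (fun ω => φ (Y ω - t)) := by
        rw [he₁, he₂, integral_add (hf₁.const_mul a) (hf₂.const_mul b), integral_const_mul,
          integral_const_mul]
        norm_cast

end eexp

namespace IsLossFunction

variable {ℓ : ℝ → EReal}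

theorem exists_affine_minorant (hℓ : IsLossFunction ℓ) :
    ∃ a b : ℝ, 0 ≤ b ∧ ∀ t, ((a + b * t : ℝ) : EReal) ≤ ℓ t := by
  obtain ⟨x, y, hx, hy, hxy⟩ := hℓ.nonconst
  wlog hlt : ℓ x < ℓ y generalizing x y
  · exact this y x hy hx hxy.symm ((not_lt.1 hlt).lt_of_ne hxy.symm)
  have hxy' : x < y := hℓ.mono.reflect_lt hlt
  obtain ⟨u, hu⟩ : ∃ u : ℝ, ℓ x = u := ⟨_, (EReal.coe_toReal hx (hℓ.ne_bot x)).symm⟩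
  obtain ⟨v, hv⟩ : ∃ v : ℝ, ℓ y = v := ⟨_, (EReal.coe_toReal hy (hℓ.ne_bot y)).symm⟩
  have huv : u < v := by rw [hu, hv] at hlt; exact_mod_cast hlt
  set k := (v - u) / (y - x)
  have hk : 0 ≤ k := div_nonneg (by linarith) (by linarith)
  have hchord : u + k * (y - x) = v := by
    simp only [k]
    rw [div_mul_cancel₀ _ (sub_pos.2 hxy').ne']
    ring
  -- `u + k (t - y)` is the chord through `(x, u)` and `(y, v)`, lowered by `v - u`.
  refine ⟨u - k * y, k, hk, fun t => ?_⟩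
  rcases lt_or_ge t x with htx | hxt
  · refine le_trans ?_ (hℓ.convex.line_le_left (k := k) htx hxy' hu.ge (by rw [hchord, hv]))
    exact_mod_cast (by nlinarith : u - k * y + k * t ≤ u + k * (t - x))
  rcases le_or_gt t y with hty | hyt
  · refine le_trans ?_ (hu.ge.trans (hℓ.mono hxt))
    exact_mod_cast (by nlinarith : u - k * y + k * t ≤ u)
  · refine le_trans ?_ (hℓ.convex.line_le_right (k := k) hxy' hyt
      (hu.trans_le (by exact_mod_cast (by linarith : u ≤ v + k * (x - y)))) hv.ge)
    exact_mod_cast (by nlinarith : u - k * y + k * t ≤ v + k * (t - y))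

variable {Ω : Type*} [MeasurableSpace Ω] {μ : Measure Ω} {X : Ω → ℝ} {K : ℝ}

theorem exists_affine_ae_le (hℓ : IsLossFunction ℓ) (hXb : ∀ᵐ ω ∂μ, |X ω| ≤ K) :
    ∃ a b : ℝ, ∀ s, ∀ᵐ ω ∂μ, ((a + b * s : ℝ) : EReal) ≤ ℓ (-X ω - s) := by
  obtain ⟨a, b, hb, hab⟩ := hℓ.exists_affine_minorant
  refine ⟨a - b * K, -b, fun s => ?_⟩
  filter_upwards [hXb] with ω hω
  have hXK := (abs_le.1 hω).2
  exact le_trans (by exact_mod_cast (by nlinarith : a - b * K + -b * s ≤ a + b * (-X ω - s)))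
    (hab _)

theorem eexp_comp_le [IsProbabilityMeasure μ] (hℓ : IsLossFunction ℓ) (hX : Measurable X)
    (hXb : ∀ᵐ ω ∂μ, |X ω| ≤ K) (s : ℝ) : eexp μ (fun ω => ℓ (-X ω - s)) ≤ ℓ (K - s) := by
  by_cases htop : ℓ (K - s) = ⊤
  · exact htop ▸ le_top
  obtain ⟨w, hw⟩ : ∃ w : ℝ, ℓ (K - s) = w := ⟨_, (EReal.coe_toReal htop (hℓ.ne_bot _)).symm⟩
  obtain ⟨a, b, hab⟩ := hℓ.exists_affine_ae_le hXb
  have hle : ∀ᵐ ω ∂μ, ℓ (-X ω - s) ≤ w := by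
    filter_upwards [hXb] with ω hω
    exact hw ▸ hℓ.mono (by linarith [(abs_le.1 hω).1])
  have hmeas : Measurable fun ω => ℓ (-X ω - s) := hℓ.mono.measurable.comp (hX.neg.sub_const s)
  simpa [hw] using eexp_le_integral (f := fun _ => w) hmeas.aemeasurable (integrable_const _)
    (integrable_const w) (hab s) hle

theorem lt_eexp_comp [IsProbabilityMeasure μ] (hℓ : IsLossFunction ℓ) (hXb : ∀ᵐ ω ∂μ, |X ω| ≤ K)
    {x₀ t s : ℝ} (ht : (x₀ : EReal) < ℓ t) (hs : s < -K - t) :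
    (x₀ : EReal) < eexp μ (fun ω => ℓ (-X ω - s)) := by
  obtain ⟨c, hxc, hct⟩ := EReal.exists_between_coe_real ht
  refine hxc.trans_le (coe_le_eexp ?_)
  filter_upwards [hXb] with ω hω
  exact hct.le.trans (hℓ.mono (by linarith [(abs_le.1 hω).2]))

end IsLossFunction

/-- Strong Lagrangian duality for the shortfall risk measure:
`ρ_ℓ(X) = sup_{λ>0} ( inf_s (s + λ E[ℓ(-X-s)]) - λ x⁰ )`. -/
theorem shortfall_lagrangian_duality {Ω : Type*} [MeasurableSpace Ω]
    (μ : Measure Ω) [IsProbabilityMeasure μ]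
    (ℓ : ℝ → EReal) (hℓ : IsLossFunction ℓ)
    (x0 : ℝ) (hx0 : (x0 : EReal) ∈ interior (Set.range ℓ))
    (X : Ω → ℝ) (hX : Measurable X) (K : ℝ) (hXb : ∀ᵐ ω ∂μ, |X ω| ≤ K) :
    ((shortfallRho μ ℓ x0 X : ℝ) : EReal) =
      ⨆ lam ∈ Set.Ioi (0 : ℝ),
        ((⨅ s : ℝ, ((s : EReal) + (lam : EReal) * eexp μ (fun ω => ℓ (-X ω - s))))
          - ((lam * x0 : ℝ) : EReal)) := by
  obtain ⟨t, t', ht, ht'⟩ := exists_lt_lt_of_mem_interior_range hx0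
    ⟨⊥, EReal.bot_lt_coe x0⟩ ⟨⊤, EReal.coe_lt_top x0⟩
  obtain ⟨a, b, hab⟩ := hℓ.exists_affine_ae_le hXb
  have hconvex : ERealConvexOn fun s => eexp μ fun ω => ℓ (-X ω - s) :=
    hℓ.convex.eexp_comp_sub hℓ.ne_bot hℓ.mono.measurable hX.neg fun s => ⟨_, hab s⟩
  have hslater : eexp μ (fun ω => ℓ (-X ω - (K - t))) < x0 :=
    (hℓ.eexp_comp_le hX hXb (K - t)).trans_lt (by rwa [sub_sub_cancel])
  have hbdd : BddBelow {s | eexp μ (fun ω => ℓ (-X ω - s)) ≤ x0} :=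
    ⟨-K - t', fun s hs => not_lt.1 fun hlt => (hℓ.lt_eexp_comp hXb ht' hlt).not_ge hs⟩
  exact hconvex.sInf_sublevel_eq_iSup_lagrangian ⟨a, b, fun s => coe_le_eexp (hab s)⟩
    ⟨_, hslater⟩ hbdd
end
end

section
/- Let $\ell$ be a loss function with conjugate $g = \ell^*$ whose domain has endpoints $\alpha \le \beta$ in $\mathbb{R}_+ \cup \{+\infty\}$. If $\lambda > 0$ satisfies $\lambda \alpha > 1$ or $\lambda \beta < 1$, then $\inf_{s \in \mathbb{R}}\big(s + \lambda \mathbb{E}[\ell(-X - s)]\big) = -\infty$ for every $X \in L^\infty$. -/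
open MeasureTheory Set Filter
open scoped Pointwise

noncomputable section

/-- If `λα > 1` or `λβ < 1`, where `α ≤ β` are the endpoints of the effective domain of
`g = ℓ*`, then `inf_s (s + λ E[ℓ(-X-s)]) = -∞` for every `X ∈ L^∞`. -/
theorem divergence_inf_eq_bot {Ω : Type*} [MeasurableSpace Ω]
    (μ : Measure Ω) [IsProbabilityMeasure μ]
    (ℓ : ℝ → EReal) (hℓ : IsLossFunction ℓ)
    (α β : EReal)
    (hα : α = sInf ((fun y : ℝ => (y : EReal)) '' {y : ℝ | fconj ℓ y ≠ ⊤}))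
    (hβ : β = sSup ((fun y : ℝ => (y : EReal)) '' {y : ℝ | fconj ℓ y ≠ ⊤}))
    (lam : ℝ) (hlam : 0 < lam)
    (hout : (1 : EReal) < (lam : EReal) * α ∨ (lam : EReal) * β < 1)
    (X : Ω → ℝ) (hX : Measurable X) (K : ℝ) (hXb : ∀ᵐ ω ∂μ, |X ω| ≤ K) :
    (⨅ s : ℝ, ((s : EReal) + (lam : EReal) * eexp μ (fun ω => ℓ (-X ω - s)))) = ⊥ := by
  classical
  -- `K ≥ 0`
  have hμ : μ ≠ 0 := IsProbabilityMeasure.ne_zero μ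
  have hne : (MeasureTheory.ae μ).NeBot := ae_neBot.2 hμ
  obtain ⟨ω0, hω0⟩ := hXb.exists
  have hK : 0 ≤ K := le_trans (abs_nonneg _) hω0
  -- `g (1/λ) = ⊤`
  have hg : fconj ℓ (1 / lam) = ⊤ := by
    by_contra h
    have hmem : ((1 / lam : ℝ) : EReal) ∈ ((fun y : ℝ => (y : EReal)) '' {y : ℝ | fconj ℓ y ≠ ⊤}) :=
      ⟨1 / lam, h, rfl⟩
    have h1 : α ≤ ((1 / lam : ℝ) : EReal) := hα ▸ sInf_le hmem
    have h2 : ((1 / lam : ℝ) : EReal) ≤ β := hβ ▸ le_sSup hmem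
    have hco : (lam : EReal) * ((1 / lam : ℝ) : EReal) = 1 := by
      rw [← EReal.coe_mul, mul_one_div, div_self hlam.ne']
      rfl
    have hl0 : (0 : EReal) ≤ (lam : EReal) := by exact_mod_cast hlam.le
    rcases hout with h' | h'
    · exact absurd ((mul_le_mul_of_nonneg_left h1 hl0).trans_eq hco) (not_le.2 h')
    · exact absurd (hco ▸ mul_le_mul_of_nonneg_left h2 hl0) (not_le.2 h')
  · rw [iInf_eq_bot]
    intro b hb
    obtain ⟨c, hc1, hc2⟩ := exists_between hb
    set M : ℝ := c.toReal with hM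
    have hcM : (M : EReal) = c := EReal.coe_toReal (hc2.ne_top) (hc1.ne')
    -- find `x` with `x/λ - ℓ x > (M - K)/λ`
    have hlt : (((K - M) / lam : ℝ) : EReal) < ⨆ x : ℝ, ((x * (1 / lam) : ℝ) : EReal) - ℓ x := by
      rw [← fconj, hg]; exact EReal.coe_lt_top _
    obtain ⟨x, hx⟩ := lt_iSup_iff.1 hlt
    have hxt : ℓ x ≠ ⊤ := by
      intro ht
      rw [ht, EReal.sub_top] at hx
      exact absurd hx (by simp)
    set r : ℝ := (ℓ x).toReal with hrdef
    have hr : (r : EReal) = ℓ x := EReal.coe_toReal hxt (hℓ.ne_bot x)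
    have hxr : (K - M) / lam < x * (1 / lam) - r := by
      rw [← hr, ← EReal.coe_sub] at hx
      exact_mod_cast hx
    have hkey : K - x + lam * r < M := by
      have := (mul_lt_mul_of_pos_left hxr hlam)
      rw [mul_sub] at this
      field_simp at this
      linarith
    set s : ℝ := K - x with hs
    -- the integrand is bounded between `ℓ (x - 2*K)` and `ℓ x`
    have hlow_ne_top : ℓ (x - 2 * K) ≠ ⊤ := by
      intro ht
      exact hxt (top_le_iff.1 (ht ▸ hℓ.mono (by linarith : x - 2 * K ≤ x)))
    set L : ℝ := (ℓ (x - 2 * K)).toReal with hLdef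
    have hL : (L : EReal) = ℓ (x - 2 * K) := EReal.coe_toReal hlow_ne_top (hℓ.ne_bot _)
    have hbound : ∀ᵐ ω ∂μ, L ≤ (ℓ (-X ω - s)).toReal ∧ (ℓ (-X ω - s)).toReal ≤ r := by
      filter_upwards [hXb] with ω hω
      have h1 : x - 2 * K ≤ -X ω - s := by
        have := abs_le.1 hω
        simp only [hs]; linarith [this.2]
      have h2 : -X ω - s ≤ x := by
        have := abs_le.1 hω
        simp only [hs]; linarith [this.1]
      have hub : ℓ (-X ω - s) ≤ ℓ x := hℓ.mono h2
      have hlb : ℓ (x - 2 * K) ≤ ℓ (-X ω - s) := hℓ.mono h1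
      have hnt : ℓ (-X ω - s) ≠ ⊤ := fun ht => hxt (top_le_iff.1 (ht ▸ hub))
      constructor
      · rw [hLdef]
        exact EReal.toReal_le_toReal hlb (hℓ.ne_bot _) hnt
      · rw [hrdef]
        exact EReal.toReal_le_toReal hub (hℓ.ne_bot _) hxt
    have hmeas : Measurable fun ω => (ℓ (-X ω - s)).toReal :=
      measurable_ereal_toReal.comp (hℓ.lsc.measurable.comp ((hX.neg).sub measurable_const))
    have hint : Integrable (fun ω => (ℓ (-X ω - s)).toReal) μ := by
      refine ⟨hmeas.aestronglyMeasurable, HasFiniteIntegral.of_bounded (C := max |L| |r|) ?_⟩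
      filter_upwards [hbound] with ω hω
      rw [Real.norm_eq_abs, abs_le]
      constructor
      · calc -(max |L| |r|) ≤ -|L| := by simp
          _ ≤ L := neg_abs_le L
          _ ≤ _ := hω.1
      · calc (ℓ (-X ω - s)).toReal ≤ r := hω.2
          _ ≤ |r| := le_abs_self r
          _ ≤ max |L| |r| := le_max_right _ _
    have haet : ∀ᵐ ω ∂μ, ℓ (-X ω - s) ≠ ⊤ := by
      filter_upwards [hXb] with ω hω
      have h2 : -X ω - s ≤ x := by
        have := abs_le.1 hω
        simp only [hs]; linarith [this.1]
      exact fun ht => hxt (top_le_iff.1 (ht ▸ hℓ.mono h2))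
    have heexp : eexp μ (fun ω => ℓ (-X ω - s)) =
        ((∫ ω, (ℓ (-X ω - s)).toReal ∂μ : ℝ) : EReal) := by
      rw [eexp, if_pos ⟨hint, haet⟩]
    set I : ℝ := ∫ ω, (ℓ (-X ω - s)).toReal ∂μ with hI
    have hIr : I ≤ r := by
      calc I ≤ ∫ _, r ∂μ := by
              refine integral_mono_ae hint (integrable_const r) ?_
              filter_upwards [hbound] with ω hω using hω.2
        _ = r := by simp
    refine ⟨s, ?_⟩
    have hval : (s : EReal) + (lam : EReal) * eexp μ (fun ω => ℓ (-X ω - s)) =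
        ((s + lam * I : ℝ) : EReal) := by
      rw [heexp, ← EReal.coe_mul, ← EReal.coe_add]
    rw [hval]
    have hfin : s + lam * I < M := by
      have : lam * I ≤ lam * r := mul_le_mul_of_nonneg_left hIr hlam.le
      simp only [hs]; linarith
    calc ((s + lam * I : ℝ) : EReal) < (M : EReal) := EReal.coe_lt_coe_iff.2 hfin
      _ = c := hcM
      _ < b := hc2
end
end

section
/- Let $\ell$ be a vector loss function on $\mathbb{R}^m$ with componentwise loss functions $\ell_1, \dots, \ell_m$, let $x^0 \in \mathrm{int}\,\ell(\mathrm{dom}\,\ell)$, and let $C \subseteq \mathbb{R}^m$ be closed convex with $C + \mathbb{R}^m_+ \subseteq C$ and $0$ a boundary point of $C$. Define $R_\ell(X) = \{z \in \mathbb{R}^m \mid \mathbb{E}[\ell(-X - z)] \in x^0 - C\}$ for $X \in L^\infty_m$. Then $R_\ell$ is convex in the set-valued sense: for all $X, Y \in L^\infty_m$ and $\lambda \in (0,1)$, $R_\ell(\lambda X + (1-\lambda) Y) \supseteq \lambda R_\ell(X) + (1-\lambda) R_\ell(Y)$. -/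
open MeasureTheory Set Filter
open scoped Pointwise

noncomputable section

/-- The set-valued shortfall risk measure
`R_ℓ(X) = {z ∈ ℝ^m | E[ℓ(-X-z)] ∈ x⁰ - C}`, where the (componentwise) expected loss
is required to be finite. -/
def Rsf {Ω : Type*} [MeasurableSpace Ω] (μ : Measure Ω) {m : ℕ} (ℓ : Fin m → ℝ → EReal)
    (x0 : Fin m → ℝ) (C : Set (Fin m → ℝ)) (X : Ω → Fin m → ℝ) : Set (Fin m → ℝ) :=
  {z | ∃ e : Fin m → ℝ,
    (∀ i, eexp μ (fun ω => ℓ i (-(X ω i) - z i)) = (e i : EReal)) ∧ x0 - e ∈ C}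

/-! By convexity of each loss, the expected loss at `a X + (1 - a) Y` shifted by `a z + (1 - a) w`
is at most the same convex combination of the expected losses at `(X, z)` and `(Y, w)`; convexity
of `C` and `C + ℝᵐ₊ ⊆ C` then put it in `x⁰ - C`. Integrability of the new loss is squeezed
between that convex upper bound and a constant lower bound, which monotonicity of the loss
provides once the positions are essentially bounded. -/

lemma eexp_eq_coe_iff {Ω : Type*} [MeasurableSpace Ω] {μ : Measure Ω} {g : Ω → EReal} {e : ℝ} :
    eexp μ g = (e : EReal) ↔ Integrable (fun ω => (g ω).toReal) μ ∧ (∀ᵐ ω ∂μ, g ω ≠ ⊤) ∧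
      ∫ ω, (g ω).toReal ∂μ = e := by
  unfold eexp
  split_ifs with hg
  · simp [hg]
  · simpa [EReal.coe_ne_top, eq_comm] using fun h h' _ => hg ⟨h, h'⟩

namespace IsLossFunction

variable {f : ℝ → EReal}

lemma toReal_le_toReal (hf : IsLossFunction f) {x y : ℝ} (hxy : x ≤ y) (hy : f y ≠ ⊤) :
    (f x).toReal ≤ (f y).toReal :=
  EReal.toReal_le_toReal (hf.mono hxy) (hf.ne_bot x) hy

lemma convex_toReal (hf : IsLossFunction f) {x y a b : ℝ} (ha : 0 ≤ a) (hb : 0 ≤ b)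
    (hab : a + b = 1) (hx : f x ≠ ⊤) (hy : f y ≠ ⊤) :
    f (a * x + b * y) ≠ ⊤ ∧ (f (a * x + b * y)).toReal ≤ a * (f x).toReal + b * (f y).toReal := by
  have hconv : f (a * x + b * y) ≤ ((a * (f x).toReal + b * (f y).toReal : ℝ) : EReal) := by
    simpa [EReal.coe_toReal hx (hf.ne_bot x), EReal.coe_toReal hy (hf.ne_bot y)] using
      hf.convex x y a b ha hb hab
  exact ⟨ne_top_of_le_ne_top (EReal.coe_ne_top _) hconv,
    by simpa only [EReal.toReal_coe] using
      EReal.toReal_le_toReal hconv (hf.ne_bot _) (EReal.coe_ne_top _)⟩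

lemma eexp_convexComb_le {Ω : Type*} [MeasurableSpace Ω] {μ : Measure Ω} [IsFiniteMeasure μ]
    (hf : IsLossFunction f) {u v : Ω → ℝ} (hu : Measurable u) (hv : Measurable v) {K : ℝ}
    (hKu : ∀ᵐ ω ∂μ, K ≤ u ω) (hKv : ∀ᵐ ω ∂μ, K ≤ v ω) {eu ev : ℝ}
    (heu : eexp μ (fun ω => f (u ω)) = eu) (hev : eexp μ (fun ω => f (v ω)) = ev)
    {a b : ℝ} (ha : 0 ≤ a) (hb : 0 ≤ b) (hab : a + b = 1) :
    ∃ e ≤ a * eu + b * ev, eexp μ (fun ω => f (a * u ω + b * v ω)) = e := by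
  obtain ⟨hIu, hTu, hEu⟩ := eexp_eq_coe_iff.mp heu
  obtain ⟨hIv, hTv, hEv⟩ := eexp_eq_coe_iff.mp hev
  set w : Ω → ℝ := fun ω => a * u ω + b * v ω
  have hupper : ∀ᵐ ω ∂μ, f (w ω) ≠ ⊤ ∧
      (f (w ω)).toReal ≤ a * (f (u ω)).toReal + b * (f (v ω)).toReal := by
    filter_upwards [hTu, hTv] with ω hu hv using hf.convex_toReal ha hb hab hu hv
  have hlower : ∀ᵐ ω ∂μ, (f K).toReal ≤ (f (w ω)).toReal := by
    filter_upwards [hKu, hKv, hupper] with ω hu hv hw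
    refine hf.toReal_le_toReal ?_ hw.1
    calc K = a * K + b * K := by rw [← add_mul, hab, one_mul]
      _ ≤ a * u ω + b * v ω := by gcongr
  have hIuv : Integrable (fun ω => a * (f (u ω)).toReal + b * (f (v ω)).toReal) μ :=
    (hIu.const_mul a).add (hIv.const_mul b)
  have hmeas : Measurable fun ω => (f (w ω)).toReal :=
    measurable_ereal_toReal.comp (hf.lsc.measurable.comp ((hu.const_mul a).add (hv.const_mul b)))
  have hIw : Integrable (fun ω => (f (w ω)).toReal) μ :=
    integrable_of_le_of_le hmeas.aestronglyMeasurable hlower (hupper.mono fun _ h => h.2)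
      (integrable_const _) hIuv
  refine ⟨∫ ω, (f (w ω)).toReal ∂μ, ?_, eexp_eq_coe_iff.mpr ⟨hIw, hupper.mono fun _ h => h.1, rfl⟩⟩
  calc ∫ ω, (f (w ω)).toReal ∂μ
      ≤ ∫ ω, a * (f (u ω)).toReal + b * (f (v ω)).toReal ∂μ :=
        integral_mono_ae hIw hIuv (hupper.mono fun _ h => h.2)
    _ = a * eu + b * ev := by
        rw [integral_add (hIu.const_mul a) (hIv.const_mul b), integral_const_mul,
          integral_const_mul, hEu, hEv]

end IsLossFunction

lemma ae_le_neg_sub_of_norm_le {Ω : Type*} [MeasurableSpace Ω] {μ : Measure Ω} {m : ℕ}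
    {X : Ω → Fin m → ℝ} {K : ℝ} (hK : ∀ᵐ ω ∂μ, ‖X ω‖ ≤ K) (z : Fin m → ℝ) (i : Fin m) :
    ∀ᵐ ω ∂μ, -(K + ‖z‖) ≤ -(X ω i) - z i := by
  filter_upwards [hK] with ω hω
  have hX := (abs_le.mp ((Real.norm_eq_abs _).symm.trans_le (norm_le_pi_norm (X ω) i))).2
  have hz := (abs_le.mp ((Real.norm_eq_abs _).symm.trans_le (norm_le_pi_norm z i))).2
  linarith

lemma mem_Rsf_of_eexp_le {Ω : Type*} [MeasurableSpace Ω] {μ : Measure Ω} {m : ℕ}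
    {ℓ : Fin m → ℝ → EReal} {x0 : Fin m → ℝ} {C : Set (Fin m → ℝ)}
    (hCup : C + {p : Fin m → ℝ | ∀ i, 0 ≤ p i} ⊆ C) {X : Ω → Fin m → ℝ} {z e e' : Fin m → ℝ}
    (he : ∀ i, eexp μ (fun ω => ℓ i (-(X ω i) - z i)) = (e i : EReal)) (hee' : e ≤ e')
    (he' : x0 - e' ∈ C) :
    z ∈ Rsf μ ℓ x0 C X :=
  ⟨e, he, by simpa using hCup (Set.add_mem_add he' (show ∀ i, 0 ≤ (e' - e) i from
    fun i => sub_nonneg.mpr (hee' i)))⟩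

theorem set_valued_shortfall_convex_general {Ω : Type*} [MeasurableSpace Ω]
    (μ : Measure Ω) [IsProbabilityMeasure μ] (m : ℕ)
    (ℓ : Fin m → ℝ → EReal) (hℓ : ∀ i, IsLossFunction (ℓ i))
    (x0 : Fin m → ℝ)
    (C : Set (Fin m → ℝ)) (hCco : Convex ℝ C)
    (hCup : C + {p : Fin m → ℝ | ∀ i, 0 ≤ p i} ⊆ C)
    (X Y : Ω → Fin m → ℝ) (hX : Measurable X) (hY : Measurable Y)
    (hXb : ∃ K, ∀ᵐ ω ∂μ, ‖X ω‖ ≤ K) (hYb : ∃ K, ∀ᵐ ω ∂μ, ‖Y ω‖ ≤ K)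
    (a : ℝ) (ha : a ∈ Set.Ioo (0 : ℝ) 1) :
    a • Rsf μ ℓ x0 C X + (1 - a) • Rsf μ ℓ x0 C Y ⊆
      Rsf μ ℓ x0 C (fun ω => a • X ω + (1 - a) • Y ω) := by
  rintro _ ⟨_, ⟨zX, ⟨eX, heX, hCX⟩, rfl⟩, _, ⟨zY, ⟨eY, heY, hCY⟩, rfl⟩, rfl⟩
  obtain ⟨KX, hKX⟩ := hXb
  obtain ⟨KY, hKY⟩ := hYb
  have hb : 0 ≤ 1 - a := sub_nonneg.mpr ha.2.le
  have hab : a + (1 - a) = 1 := add_sub_cancel a 1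
  have hloss (i : Fin m) : ∃ e ≤ a * eX i + (1 - a) * eY i, eexp μ (fun ω =>
      ℓ i (a * (-(X ω i) - zX i) + (1 - a) * (-(Y ω i) - zY i))) = e :=
    (hℓ i).eexp_convexComb_le (((measurable_pi_apply i).comp hX).neg.sub_const _)
      (((measurable_pi_apply i).comp hY).neg.sub_const _)
      ((ae_le_neg_sub_of_norm_le hKX zX i).mono fun _ => (min_le_left _ _).trans)
      ((ae_le_neg_sub_of_norm_le hKY zY i).mono fun _ => (min_le_right _ _).trans)
      (heX i) (heY i) ha.1.le hb hab
  choose e hle he using hloss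
  refine mem_Rsf_of_eexp_le hCup (fun i => ?_) (e' := a • eX + (1 - a) • eY) hle ?_
  · convert he i using 4
    simp only [Pi.add_apply, Pi.smul_apply, smul_eq_mul]
    ring
  · convert hCco hCX hCY ha.1.le hb hab using 1
    funext i
    simp only [Pi.add_apply, Pi.sub_apply, Pi.smul_apply, smul_eq_mul]
    linear_combination (-x0 i) * hab

/-- The set-valued shortfall risk measure is convex:
`R_ℓ(a X + (1-a) Y) ⊇ a R_ℓ(X) + (1-a) R_ℓ(Y)` for `a ∈ (0,1)`. -/
theorem set_valued_shortfall_convex {Ω : Type*} [MeasurableSpace Ω]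
    (μ : Measure Ω) [IsProbabilityMeasure μ] (m : ℕ)
    (ℓ : Fin m → ℝ → EReal) (hℓ : ∀ i, IsLossFunction (ℓ i))
    (x0 : Fin m → ℝ) (hx0 : ∀ i, ((x0 i : ℝ) : EReal) ∈ interior (Set.range (ℓ i)))
    (C : Set (Fin m → ℝ)) (hCcl : IsClosed C) (hCco : Convex ℝ C)
    (hCup : C + {p : Fin m → ℝ | ∀ i, 0 ≤ p i} ⊆ C)
    (h0C : (0 : Fin m → ℝ) ∈ frontier C)
    (X Y : Ω → Fin m → ℝ) (hX : Measurable X) (hY : Measurable Y)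
    (hXb : ∃ K, ∀ᵐ ω ∂μ, ‖X ω‖ ≤ K) (hYb : ∃ K, ∀ᵐ ω ∂μ, ‖Y ω‖ ≤ K)
    (a : ℝ) (ha : a ∈ Set.Ioo (0 : ℝ) 1) :
    a • Rsf μ ℓ x0 C X + (1 - a) • Rsf μ ℓ x0 C Y ⊆
      Rsf μ ℓ x0 C (fun ω => a • X ω + (1 - a) • Y ω) :=
  set_valued_shortfall_convex_general μ m ℓ hℓ x0 C hCco hCup X Y hX hY hXb hYb a ha
end
end

section
/- Let $\beta_i > 0$ for $i = 1, \dots, m$, let $\ell_i(x) = (e^{\beta_i x} - 1)/\beta_i$ be the exponential loss functions, $x^0 \in \prod_{i=1}^m (-1/\beta_i, +\infty)$, and $C \subseteq \mathbb{R}^m$ closed convex upper set with $0 \in \partial C$. Then the entropic risk measure $R^{\mathrm{ent}}(X) = \{z \in \mathbb{R}^m \mid \mathbb{E}[\ell(-X - z)] \in x^0 - C\}$ satisfies $R^{\mathrm{ent}}(X) = \rho^{\mathrm{ent}}(X) + \tilde C$ for every $X \in L^\infty_m$, where $\rho^{\mathrm{ent}}(X) = \big(\frac{1}{\beta_1}\log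 \mathbb{E}[e^{-\beta_1 X_1}], \dots, \frac{1}{\beta_m}\log \mathbb{E}[e^{-\beta_m X_m}]\big)^{\mathsf{T}}$ and $\tilde C = \{z \in \mathbb{R}^m \mid z_i = -\frac{1}{\beta_i}\log(1 + \beta_i(x^0_i - c_i)),\ i = 1,\dots,m,\ c \in C \cap \prod_{j=1}^m (-\infty, x^0_j + 1/\beta_j)\}$. -/
open MeasureTheory Set
open scoped Pointwise

open Real

/-! For the exponential loss the expectation factors:
`E[ℓᵢ(-Xᵢ - zᵢ)] = (e^{-βᵢ zᵢ} E[e^{-βᵢ Xᵢ}] - 1) / βᵢ`. So `x⁰ - E[ℓ(-X - z)] = c` can be solved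
for `z` coordinatewise: it holds iff `1 + βᵢ (x⁰ᵢ - cᵢ) > 0` and
`zᵢ = ρᵢ(X) - (1/βᵢ) log (1 + βᵢ (x⁰ᵢ - cᵢ))`. Hence `z ∈ R(X)` iff `z - ρ(X) ∈ C̃`. -/

section

variable {Ω : Type*} [MeasurableSpace Ω] {μ : Measure Ω}

lemma integrable_exp_const_mul_of_abs_le [IsFiniteMeasure μ] {Y : Ω → ℝ}
    (hY : AEStronglyMeasurable Y μ) {K : ℝ} (hK : ∀ ω, |Y ω| ≤ K) (b : ℝ) :
    Integrable (fun ω => exp (b * Y ω)) μ := by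
  refine Integrable.of_bound (by fun_prop) (exp (|b| * K)) (ae_of_all _ fun ω => ?_)
  rw [norm_of_nonneg (exp_pos _).le, exp_le_exp]
  calc b * Y ω ≤ |b * Y ω| := le_abs_self _
    _ = |b| * |Y ω| := abs_mul _ _
    _ ≤ |b| * K := mul_le_mul_of_nonneg_left (hK ω) (abs_nonneg b)

lemma integral_exp_loss_neg_sub [IsProbabilityMeasure μ] {Y : Ω → ℝ} {b : ℝ}
    (hY : Integrable (fun ω => exp (-b * Y ω)) μ) (z : ℝ) :
    ∫ ω, (exp (b * (-Y ω - z)) - 1) / b ∂μ =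
      (exp (-b * z) * ∫ ω, exp (-b * Y ω) ∂μ - 1) / b := by
  have hsplit : ∀ ω, exp (b * (-Y ω - z)) = exp (-b * z) * exp (-b * Y ω) := fun ω => by
    rw [← exp_add]; ring_nf
  simp_rw [hsplit]
  rw [integral_div, integral_sub (hY.const_mul _) (integrable_const 1), integral_const_mul,
    integral_const, probReal_univ, one_smul]

end

lemma exp_neg_mul_mul_eq_iff {b E s z : ℝ} (hb : b ≠ 0) (hE : 0 < E) (hs : 0 < s) :
    exp (-b * z) * E = s ↔ z = 1 / b * log E + -(1 / b) * log s := by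
  rw [← log_injOn_pos.eq_iff (mem_Ioi.2 (by positivity)) (mem_Ioi.2 hs),
    log_mul (exp_ne_zero _) hE.ne', log_exp]
  constructor <;> intro h
  · field_simp; linarith
  · subst h; field_simp; ring

lemma sub_exp_loss_eq_iff {b E x0 z c : ℝ} (hb : 0 < b) (hE : 0 < E) :
    x0 - (exp (-b * z) * E - 1) / b = c ↔
      c < x0 + 1 / b ∧ z = 1 / b * log E + -(1 / b) * log (1 + b * (x0 - c)) := by
  have hpos : 0 < 1 + b * (x0 - c) ↔ c < x0 + 1 / b := by
    rw [← sub_pos (b := c), show x0 + 1 / b - c = (1 + b * (x0 - c)) / b by field_simp; ring,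
      div_pos_iff_of_pos_right hb]
  have hlin : x0 - (exp (-b * z) * E - 1) / b = c ↔ exp (-b * z) * E = 1 + b * (x0 - c) := by
    rw [sub_eq_iff_eq_add', ← sub_eq_iff_eq_add, eq_div_iff hb.ne']
    constructor <;> intro h <;> linarith
  rw [hlin]
  constructor
  · intro h
    have ht : 0 < 1 + b * (x0 - c) := h ▸ mul_pos (exp_pos _) hE
    exact ⟨hpos.1 ht, (exp_neg_mul_mul_eq_iff hb.ne' hE ht).1 h⟩
  · rintro ⟨hc, hz⟩
    exact (exp_neg_mul_mul_eq_iff hb.ne' hE (hpos.2 hc)).2 hz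

theorem entropic_risk_measure_decomposition_general {Ω : Type*} [MeasurableSpace Ω]
    (μ : Measure Ω) [IsProbabilityMeasure μ] (m : ℕ)
    (β x0 : Fin m → ℝ) (hβ : ∀ i, 0 < β i)
    (C : Set (Fin m → ℝ))
    (X : Ω → Fin m → ℝ) (hX : Measurable X) (hXb : ∃ K, ∀ ω, ‖X ω‖ ≤ K) :
    -- `R^ent(X) = {z | E[ℓ(-X - z)] ∈ x⁰ - C}` for the exponential loss
    {z : Fin m → ℝ |
        x0 - (fun i => ∫ ω, (Real.exp (β i * (-(X ω i) - z i)) - 1) / β i ∂μ) ∈ C}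
      = (fun c => (fun i => (1 / β i) * Real.log (∫ ω, Real.exp (-(β i) * X ω i) ∂μ)) + c)
          '' {z : Fin m → ℝ | ∃ c ∈ C, (∀ j, c j < x0 j + 1 / β j) ∧
                ∀ i, z i = -(1 / β i) * Real.log (1 + β i * (x0 i - c i))} := by
  obtain ⟨K, hK⟩ := hXb
  have hint (i : Fin m) : Integrable (fun ω => exp (-β i * X ω i)) μ :=
    integrable_exp_const_mul_of_abs_le (by fun_prop)
      (fun ω => (norm_le_pi_norm (X ω) i).trans (hK ω)) _
  have hE (i : Fin m) : 0 < ∫ ω, exp (-β i * X ω i) ∂μ := integral_exp_pos (hint i)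
  ext z
  simp only [mem_ofPred_eq, mem_image, integral_exp_loss_neg_sub (hint _)]
  constructor
  · intro hz
    have hc (i : Fin m) := (sub_exp_loss_eq_iff (x0 := x0 i) (z := z i) (hβ i) (hE i)).1 rfl
    refine ⟨z - fun i => 1 / β i * log (∫ ω, exp (-β i * X ω i) ∂μ),
      ⟨_, hz, fun i => (hc i).1, fun i => ?_⟩, add_sub_cancel _ _⟩
    rw [Pi.sub_apply, (hc i).2, Pi.sub_apply]
    ring
  · rintro ⟨w, ⟨c, hcC, hclt, hw⟩, rfl⟩
    convert hcC using 1
    funext i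
    exact (sub_exp_loss_eq_iff (hβ i) (hE i)).2 ⟨hclt i, by rw [Pi.add_apply, hw i]⟩

/-- The set-valued entropic risk measure decomposes as
`R^ent(X) = ρ^ent(X) + C̃`, where `ρ^ent(X)_i = (1/βᵢ) log E[exp(-βᵢ Xᵢ)]` and
`C̃` is a fixed set determined by `β`, `x⁰` and `C`. -/
theorem entropic_risk_measure_decomposition {Ω : Type*} [MeasurableSpace Ω]
    (μ : Measure Ω) [IsProbabilityMeasure μ] (m : ℕ)
    (β x0 : Fin m → ℝ) (hβ : ∀ i, 0 < β i) (hx0 : ∀ i, -1 / β i < x0 i)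
    (C : Set (Fin m → ℝ)) (hCcl : IsClosed C) (hCco : Convex ℝ C)
    (hCup : C + {p : Fin m → ℝ | ∀ i, 0 ≤ p i} ⊆ C)
    (h0C : (0 : Fin m → ℝ) ∈ frontier C)
    (X : Ω → Fin m → ℝ) (hX : Measurable X) (hXb : ∃ K, ∀ ω, ‖X ω‖ ≤ K) :
    -- `R^ent(X) = {z | E[ℓ(-X - z)] ∈ x⁰ - C}` for the exponential loss
    {z : Fin m → ℝ |
        x0 - (fun i => ∫ ω, (Real.exp (β i * (-(X ω i) - z i)) - 1) / β i ∂μ) ∈ C}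
      = (fun c => (fun i => (1 / β i) * Real.log (∫ ω, Real.exp (-(β i) * X ω i) ∂μ)) + c)
          '' {z : Fin m → ℝ | ∃ c ∈ C, (∀ j, c j < x0 j + 1 / β j) ∧
                ∀ i, z i = -(1 / β i) * Real.log (1 + β i * (x0 i - c i))} :=
  entropic_risk_measure_decomposition_general μ m β x0 hβ C X hX hXb
end
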